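/- Let Γ be a finite additive abelian group of odd order and let S be a multiset of elements of Γ of cardinality 3, with Cayley sum adjacency matrix A_S. Then there exists a multiset L of nonnegative real numbers such that the multiset of eigenvalues of A_S equals {3} + L + (−L). -/

import Mathlib

/-!
In the basis of characters the Cayley sum matrix is almost diagonal: `A_S ψ = Ŝ(ψ) • ψ⁻¹` with
`Ŝ(ψ) = ∑ s ∈ S, ψ s`. So it is supported on the graph of the involution `ψ ↦ ψ⁻¹`, whose only
fixed point is the trivial character when `|Γ|` is odd. The trivial character gives the eigenvalue
`Ŝ(1) = |S|`, and each pair `{ψ, ψ⁻¹}` gives a block `!![0, Ŝ(ψ⁻¹); Ŝ(ψ), 0]` with characteristic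
polynomial `X² - |Ŝ(ψ)|²`, because `Ŝ(ψ⁻¹)` is the complex conjugate of `Ŝ(ψ)`.
-/

open Finset Matrix Polynomial

namespace Matrix

lemma det_eq_of_forall_eq_or_eq {τ R : Type*} [Fintype τ] [DecidableEq τ] [CommRing R]
    {p q : τ} (hpq : p ≠ q) (hτ : ∀ x, x = p ∨ x = q) (N : Matrix τ τ R) :
    N.det = N p p * N q q - N p q * N q p := by
  have hbij : Function.Bijective ![p, q] := by
    refine ⟨fun i j hij => ?_, fun x => ?_⟩
    · fin_cases i <;> fin_cases j <;> simp_all [eq_comm]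
    · rcases hτ x with rfl | rfl
      exacts [⟨0, rfl⟩, ⟨1, rfl⟩]
  rw [← det_submatrix_equiv_self (Equiv.ofBijective _ hbij), det_fin_two]
  rfl

section Involutive

variable {ι R : Type*} [Fintype ι] [DecidableEq ι] [LinearOrder ι] [CommRing R]
  {σ : ι → ι} {M : Matrix ι ι R}

lemma charpoly_toSquareBlock_min_of_eq (hσ : Function.Involutive σ) {k : ι} (hk : σ k = k) :
    (M.toSquareBlock (fun i => min i (σ i)) k).charpoly = X - C (M k k) := by
  have : Subsingleton {i // min i (σ i) = k} := ⟨fun ⟨i, hi⟩ ⟨j, hj⟩ => by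
    have key : ∀ l, min l (σ l) = k → l = k := fun l hl => by
      rcases min_choice l (σ l) with h | h
      · rw [← hl, h]
      · rw [← hk, ← hσ l, ← hl, h]
    simp [key i hi, key j hj]⟩
  rw [charpoly, det_eq_elem_of_subsingleton _ ⟨k, by simp [hk]⟩, charmatrix_apply_eq]
  rfl

lemma charpoly_toSquareBlock_min_of_lt (hσ : Function.Involutive σ)
    (hM : ∀ i j, j ≠ σ i → M i j = 0) {k : ι} (hk : k < σ k) :
    (M.toSquareBlock (fun i => min i (σ i)) k).charpoly = X ^ 2 - C (M k (σ k) * M (σ k) k) := by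
  have hne : k ≠ σ k := hk.ne
  let p : {i // min i (σ i) = k} := ⟨k, min_eq_left hk.le⟩
  let q : {i // min i (σ i) = k} := ⟨σ k, by rw [hσ k, min_eq_right hk.le]⟩
  have hpq : p ≠ q := fun h => hne (congrArg Subtype.val h)
  have hpq_univ : ∀ x, x = p ∨ x = q := fun ⟨i, hi⟩ => by
    rcases min_choice i (σ i) with h | h
    · exact Or.inl (Subtype.ext (show i = k by rw [← hi, h]))
    · exact Or.inr (Subtype.ext (show i = σ k by rw [← hi, h, hσ]))
  rw [charpoly, charmatrix_toSquareBlock, det_eq_of_forall_eq_or_eq hpq hpq_univ]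
  simp only [p, q, toSquareBlock_def, of_apply, charmatrix_apply_eq, charmatrix_apply_ne _ _ _ hne,
    charmatrix_apply_ne _ _ _ hne.symm, hM k k hne, hM (σ k) (σ k) (by rwa [hσ, ne_comm]),
    map_zero, sub_zero, C_mul]
  ring

/-- A matrix supported on the graph of an involution is block diagonal, with `1 × 1` blocks at
the fixed points and `2 × 2` anti-diagonal blocks at the orbits of size two. -/
theorem charpoly_eq_of_involutive (hσ : Function.Involutive σ)
    (hM : ∀ i j, j ≠ σ i → M i j = 0) :
    M.charpoly = (∏ i ∈ univ.filter (fun i => σ i = i), (X - C (M i i))) *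
      ∏ i ∈ univ.filter (fun i => i < σ i), (X ^ 2 - C (M i (σ i) * M (σ i) i)) := by
  -- `BlockTriangular.charpoly` decides equality of blocks through the order.
  obtain rfl : ‹DecidableEq ι› = LinearOrder.toDecidableEq := Subsingleton.elim _ _
  have hblock : M.BlockTriangular fun i => min i (σ i) := fun i j hji => by
    refine hM i j fun hj => hji.ne ?_
    simp only [hj, hσ i, min_comm]
  have himage : image (fun i => min i (σ i)) univ = univ.filter fun k => k ≤ σ k := by
    ext k
    simp only [mem_image, mem_univ, true_and, mem_filter]
    refine ⟨?_, fun hk => ⟨k, min_eq_left hk⟩⟩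
    rintro ⟨i, rfl⟩
    rcases le_total i (σ i) with h | h
    · simpa [min_eq_left h, hσ i] using h
    · simpa [min_eq_right h, hσ i] using h
  rw [hblock.charpoly, himage, ← prod_filter_mul_prod_filter_not _ fun k => σ k = k,
    filter_filter, filter_filter]
  congr 1
  · refine prod_congr (filter_congr fun k _ => ?_) fun k hk => ?_
    · exact ⟨fun h => h.2, fun h => ⟨h.ge, h⟩⟩
    · exact charpoly_toSquareBlock_min_of_eq hσ (mem_filter.mp hk).2
  · refine prod_congr (filter_congr fun k _ => ?_) fun k hk => ?_
    · exact ⟨fun h => lt_of_le_of_ne h.1 (Ne.symm h.2), fun h => ⟨h.le, h.ne'⟩⟩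
    · exact charpoly_toSquareBlock_min_of_lt hσ hM (mem_filter.mp hk).2

end Involutive

end Matrix

lemma inv_eq_self_iff_of_odd_card {G : Type*} [Group G] (hG : Odd (Nat.card G)) {g : G} :
    g⁻¹ = g ↔ g = 1 := by
  refine ⟨fun h => (Nat.Coprime.pow_left_bijective (n := 2) hG.coprime_two_right).injective ?_,
    fun h => by rw [h, inv_one]⟩
  rw [one_pow, sq]
  nth_rewrite 1 [← h]
  exact inv_mul_cancel g

lemma Polynomial.roots_X_sub_C_mul_prod_X_sq_sub_C_sq {R ι : Type*} [CommRing R] [IsDomain R]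
    (a : R) (s : Finset ι) (r : ι → R) :
    ((X - C a) * ∏ i ∈ s, (X ^ 2 - C (r i ^ 2))).roots
      = {a} + s.val.map r + (s.val.map r).map Neg.neg := by
  have hfactor : ∏ i ∈ s, (X ^ 2 - C (r i ^ 2)) = ((s.val.map r).map fun x => X - C x).prod *
      (((s.val.map r).map Neg.neg).map fun x => X - C x).prod := by
    simp only [Multiset.map_map, Function.comp_def, ← prod_eq_multiset_prod, ← prod_mul_distrib]
    refine prod_congr rfl fun i _ => ?_
    rw [C_pow, C_neg]
    ring
  have hmonic (m : Multiset R) : (m.map fun x => X - C x).prod.Monic :=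
    monic_multiset_prod_of_monic _ _ fun x _ => monic_X_sub_C x
  rw [hfactor, roots_mul ((monic_X_sub_C a).mul ((hmonic _).mul (hmonic _))).ne_zero,
    roots_mul ((hmonic _).mul (hmonic _)).ne_zero, roots_X_sub_C, roots_multiset_prod_X_sub_C,
    roots_multiset_prod_X_sub_C, add_assoc]

lemma Multiset.sum_map_eq_sum_count_mul {α R : Type*} [Fintype α] [DecidableEq α]
    [NonAssocSemiring R] (S : Multiset α) (f : α → R) :
    (S.map f).sum = ∑ w, (S.count w : R) * f w := by
  rw [sum_multiset_map_count, sum_subset (subset_univ _) fun w _ hw => ?_]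
  · simp only [nsmul_eq_mul]
  · rw [Multiset.count_eq_zero.mpr (by simpa using hw), zero_smul]

section CayleySum

variable {Γ : Type*} [AddCommGroup Γ]

def charSum (S : Multiset Γ) (ψ : AddChar Γ ℂ) : ℂ :=
  (S.map ψ).sum

lemma charSum_one (S : Multiset Γ) : charSum S 1 = Multiset.card S := by
  simp [charSum]

lemma charSum_inv [Finite Γ] (S : Multiset Γ) (ψ : AddChar Γ ℂ) :
    charSum S ψ⁻¹ = starRingEnd ℂ (charSum S ψ) := by
  rw [charSum, charSum, map_multiset_sum, Multiset.map_map]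
  exact congrArg _ (Multiset.map_congr rfl fun s _ => AddChar.map_neg_eq_conj ψ s)

variable [DecidableEq Γ]

def cayleySumMatrix (R : Type*) [NatCast R] (S : Multiset Γ) : Matrix Γ Γ R :=
  of fun u v => (S.count (u + v) : R)

variable [Fintype Γ]

lemma cayleySumMatrix_mulVec_addChar (S : Multiset Γ) (ψ : AddChar Γ ℂ) :
    cayleySumMatrix ℂ S *ᵥ ψ = charSum S ψ • ⇑ψ⁻¹ := by
  ext u
  simp only [mulVec, dotProduct, cayleySumMatrix, of_apply, Pi.smul_apply, smul_eq_mul,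
    AddChar.inv_apply]
  calc ∑ v, (S.count (u + v) : ℂ) * ψ v = ∑ w, (S.count w : ℂ) * ψ (w - u) :=
        Fintype.sum_equiv (Equiv.addLeft u) _ _ fun v => by simp
    _ = (∑ w, (S.count w : ℂ) * ψ w) * ψ (-u) := by
        simp only [sum_mul, sub_eq_add_neg, AddChar.map_add_eq_mul, mul_assoc]
    _ = charSum S ψ * ψ (-u) := by rw [charSum, Multiset.sum_map_eq_sum_count_mul]

lemma toMatrix_complexBasis_cayleySumMatrix (S : Multiset Γ) :
    LinearMap.toMatrix (AddChar.complexBasis Γ) (AddChar.complexBasis Γ)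
        (toLin' (cayleySumMatrix ℂ S)) = of fun ψ φ => if ψ = φ⁻¹ then charSum S φ else 0 := by
  ext ψ φ
  rw [LinearMap.toMatrix_apply, AddChar.complexBasis_apply, toLin'_apply,
    cayleySumMatrix_mulVec_addChar, ← AddChar.complexBasis_apply, map_smul, Module.Basis.repr_self,
    Finsupp.smul_apply, Finsupp.single_apply, of_apply]
  split_ifs with h₁ h₂ h₂ <;> simp_all

lemma charpoly_cayleySumMatrix_complex [LinearOrder (AddChar Γ ℂ)] (hodd : Odd (Fintype.card Γ))
    (S : Multiset Γ) :
    (cayleySumMatrix ℂ S).charpoly = (X - C (Multiset.card S : ℂ)) *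
      ∏ ψ ∈ univ.filter (fun ψ : AddChar Γ ℂ => ψ < ψ⁻¹), (X ^ 2 - C ((‖charSum S ψ‖ : ℂ) ^ 2)) := by
  have hfixed : univ.filter (fun ψ : AddChar Γ ℂ => ψ⁻¹ = ψ) = {1} := by
    ext ψ
    simp [inv_eq_self_iff_of_odd_card (G := AddChar Γ ℂ)
      (by rwa [Nat.card_eq_fintype_card, AddChar.card_eq])]
  rw [← charpoly_toLin', ← LinearMap.charpoly_toMatrix _ (AddChar.complexBasis Γ),
    toMatrix_complexBasis_cayleySumMatrix,
    charpoly_eq_of_involutive inv_involutive ?_, hfixed, prod_singleton]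
  · simp [charSum_one, charSum_inv, Complex.conj_mul']
  · exact fun ψ φ h => if_neg fun h' => h (by rw [h', inv_inv])

lemma charpoly_cayleySumMatrix [LinearOrder (AddChar Γ ℂ)] (hodd : Odd (Fintype.card Γ))
    (S : Multiset Γ) :
    (cayleySumMatrix ℝ S).charpoly = (X - C (Multiset.card S : ℝ)) *
      ∏ ψ ∈ univ.filter (fun ψ : AddChar Γ ℂ => ψ < ψ⁻¹), (X ^ 2 - C (‖charSum S ψ‖ ^ 2)) := by
  apply map_injective (algebraMap ℝ ℂ) (algebraMap ℝ ℂ).injective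
  have hmap : (cayleySumMatrix ℝ S).map (algebraMap ℝ ℂ) = cayleySumMatrix ℂ S := by
    ext u v
    simp [cayleySumMatrix]
  rw [← charpoly_map, hmap, charpoly_cayleySumMatrix_complex hodd]
  simp [Polynomial.map_prod]

end CayleySum

/-- If `Γ` is a finite additive abelian group of odd order and `S` is a
multiset of elements of `Γ` with `|S| = 3`, then there is a multiset `L` of nonnegative
reals such that the multiset of eigenvalues of the real Cayley sum adjacency matrix
`A_S(u,v) = m_S(u+v)` equals `{3} + L + (−L)`. -/
theorem cayley_sum_odd_order_spectrum
    {Γ : Type*} [AddCommGroup Γ] [Fintype Γ] [DecidableEq Γ]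
    (hodd : Odd (Fintype.card Γ))
    (S : Multiset Γ) (hS : Multiset.card S = 3) :
    ∃ L : Multiset ℝ, (∀ x ∈ L, 0 ≤ x) ∧
      (Matrix.charpoly (Matrix.of fun u v : Γ => (S.count (u + v) : ℝ))).roots
        = ({3} : Multiset ℝ) + L + L.map (fun x => -x) := by
  -- Any order will do: it only selects one character from each pair `{ψ, ψ⁻¹}`.
  let : LinearOrder (AddChar Γ ℂ) := LinearOrder.lift' _ (Fintype.equivFin _).injective
  refine ⟨(univ.filter fun ψ : AddChar Γ ℂ => ψ < ψ⁻¹).val.map fun ψ => ‖charSum S ψ‖,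
    by simp, ?_⟩
  change (cayleySumMatrix ℝ S).charpoly.roots = _
  rw [charpoly_cayleySumMatrix hodd, hS, roots_X_sub_C_mul_prod_X_sq_sub_C_sq]
  norm_num
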